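/- arXiv:1802.04685 — 2 statements merged into one kernel-verified Lean document; each statement's English description precedes it below -/
import Mathlib

section
/- Let L be an algebraically closed field of characteristic zero and let A, B, w ∈ L[x,y]. Suppose Jac(A,B) is a unit of L[x,y] and Jac(A,w) = 0. Then w lies in L[A], the L-subalgebra of L[x,y] generated by A. -/
/-!
Since `Jac(A, B)` is a unit, `Jac(A, w) = 0` forces `∇w = h ∇A` with `h = Jac(w, B) / Jac(A, B)`.
Differentiating `∂ₓw = h ∂ₓA` in `y` and `∂ᵧw = h ∂ᵧA` in `x` gives `Jac(A, h) = 0`, and comparing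
degrees in `∂w = h ∂A` gives `deg h < deg w` (unless `h = 0`). By induction on the degree
`h = φ(A)`; then for an antiderivative `Φ` of `φ` the gradient of `w - Φ(A)` vanishes, so
`w - Φ(A)` is a constant.
-/

open MvPolynomial

/-- The Jacobian of two polynomials `p, q ∈ R[x,y]`:
`Jac(p,q) = (∂p/∂x)(∂q/∂y) − (∂p/∂y)(∂q/∂x)`. -/
noncomputable def Jac {R : Type*} [CommRing R]
    (p q : MvPolynomial (Fin 2) R) : MvPolynomial (Fin 2) R :=
  pderiv 0 p * pderiv 1 q - pderiv 1 p * pderiv 0 q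

namespace MvPolynomial

variable {σ R : Type*}

theorem pderiv_comm [CommRing R] (i j : σ) (p : MvPolynomial σ R) :
    pderiv i (pderiv j p) = pderiv j (pderiv i p) := by
  classical
  have hcomm : ⁅pderiv i, pderiv j⁆ = (0 : Derivation R (MvPolynomial σ R) _) :=
    derivation_ext fun k => by
      rw [Derivation.commutator_apply, pderiv_X, pderiv_X]
      simp [Pi.single_apply, apply_ite]
  simpa [Derivation.commutator_apply, sub_eq_zero] using congr($hcomm p)

theorem totalDegree_pderiv_lt [CommSemiring R] {i : σ} {p : MvPolynomial σ R}
    (h : pderiv i p ≠ 0) : (pderiv i p).totalDegree < p.totalDegree := by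
  obtain ⟨u, hu, hdeg⟩ : ∃ u ∈ (pderiv i p).support,
      (pderiv i p).totalDegree = u.sum fun _ e => e :=
    Finset.exists_mem_eq_sup _ (support_nonempty.mpr h) _
  have hcoeff : coeff (u + Finsupp.single i 1) p ≠ 0 := by
    intro h0
    exact mem_support_iff.mp hu (by rw [coeff_pderiv, h0, zero_mul])
  have hle := le_totalDegree (mem_support_iff.mpr hcoeff)
  rw [Finsupp.sum_add_index' (fun _ => rfl) (fun _ _ _ => rfl),
    Finsupp.sum_single_index rfl] at hle
  omega

theorem eq_C_of_forall_pderiv_eq_zero [CommSemiring R] [NoZeroDivisors R] [CharZero R]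
    {p : MvPolynomial σ R} (h : ∀ i, pderiv i p = 0) : p = C (coeff 0 p) := by
  classical
  ext m
  rw [coeff_C]
  split_ifs with hm
  · rw [hm]
  obtain ⟨i, hi⟩ : ∃ i, m i ≠ 0 := by
    by_contra! h'
    exact hm (Finsupp.ext h').symm
  have hm' : m - Finsupp.single i 1 + Finsupp.single i 1 = m :=
    tsub_add_cancel_of_le (Finsupp.single_le_iff.mpr (Nat.one_le_iff_ne_zero.mpr hi))
  have hcoeff := coeff_pderiv (i := i) p (m - Finsupp.single i 1)
  rw [h i, coeff_zero, hm'] at hcoeff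
  exact (mul_eq_zero.mp hcoeff.symm).resolve_right (Nat.cast_add_one_ne_zero _)

theorem totalDegree_lt_of_pderiv_eq_mul [CommRing R] [IsDomain R] {A p h : MvPolynomial σ R}
    {i : σ} (hA : pderiv i A ≠ 0) (hh : h ≠ 0) (hp : pderiv i p = h * pderiv i A) :
    h.totalDegree < p.totalDegree := by
  have hp0 : pderiv i p ≠ 0 := hp ▸ mul_ne_zero hh hA
  have hdeg := totalDegree_pderiv_lt hp0
  rw [hp, totalDegree_mul_of_isDomain hh hA] at hdeg
  omega

end MvPolynomial

theorem Polynomial.exists_derivative_eq {K : Type*} [Field K] [CharZero K] (φ : Polynomial K) :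
    ∃ Φ, Polynomial.derivative Φ = φ := by
  induction φ using Polynomial.induction_on' with
  | add p q hp hq =>
    obtain ⟨P, rfl⟩ := hp
    obtain ⟨Q, rfl⟩ := hq
    exact ⟨P + Q, Polynomial.derivative_add⟩
  | monomial n a =>
    refine ⟨Polynomial.monomial (n + 1) (a / (n + 1)), ?_⟩
    rw [Polynomial.derivative_monomial, Nat.add_sub_cancel]
    congr 1
    push_cast
    exact div_mul_cancel₀ a (Nat.cast_add_one_ne_zero n)

theorem MvPolynomial.mem_adjoin_singleton_of_pderiv_eq_aeval_mul {σ K : Type*} [Field K]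
    [CharZero K] {A p : MvPolynomial σ K} (φ : Polynomial K)
    (hp : ∀ i, pderiv i p = Polynomial.aeval A φ * pderiv i A) :
    p ∈ Algebra.adjoin K {A} := by
  obtain ⟨Φ, hΦ⟩ := φ.exists_derivative_eq
  have hconst : ∀ i, pderiv i (p - Polynomial.aeval A Φ) = 0 := fun i => by
    rw [map_sub, Derivation.map_aeval, hΦ, smul_eq_mul, hp, sub_self]
  rw [sub_eq_iff_eq_add.mp (eq_C_of_forall_pderiv_eq_zero hconst), ← algebraMap_eq]
  exact add_mem (Subalgebra.algebraMap_mem _ _)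
    (Algebra.adjoin_singleton_eq_range_aeval K A ▸ ⟨Φ, rfl⟩)

section Jacobian

variable {R : Type*} [CommRing R] {A B w h : MvPolynomial (Fin 2) R}

theorem exists_pderiv_ne_zero_of_isUnit_jac [Nontrivial R] (hAB : IsUnit (Jac A B)) :
    ∃ i, pderiv i A ≠ 0 := by
  by_contra! hA
  simp [Jac, hA] at hAB

theorem exists_pderiv_eq_mul_pderiv_of_jac_eq_zero (hAB : IsUnit (Jac A B))
    (hAw : Jac A w = 0) : ∃ h, ∀ i, pderiv i w = h * pderiv i A := by
  obtain ⟨u, hu⟩ := hAB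
  have hinv : (↑u⁻¹ : MvPolynomial (Fin 2) R) * Jac A B = 1 := hu ▸ u.inv_mul
  refine ⟨↑u⁻¹ * Jac w B, Fin.forall_fin_two.mpr ⟨?_, ?_⟩⟩ <;> unfold Jac at hinv hAw ⊢
  · linear_combination -pderiv 0 w * hinv + ↑u⁻¹ * pderiv 0 B * hAw
  · linear_combination -pderiv 1 w * hinv + ↑u⁻¹ * pderiv 1 B * hAw

theorem jac_eq_zero_of_pderiv_eq_mul (hw : ∀ i, pderiv i w = h * pderiv i A) : Jac A h = 0 := by
  have h01 := congrArg (pderiv 1) (hw 0)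
  have h10 := congrArg (pderiv 0) (hw 1)
  rw [pderiv_mul] at h01 h10
  unfold Jac
  linear_combination h10 - h01 - pderiv_comm 0 1 w + h * pderiv_comm 0 1 A

end Jacobian

theorem cmw_over_algClosed_general {L : Type*} [Field L] [CharZero L]
    (A B w : MvPolynomial (Fin 2) L)
    (hAB : IsUnit (Jac A B)) (hAw : Jac A w = 0) :
    w ∈ Algebra.adjoin L {A} := by
  obtain ⟨i, hAi⟩ := exists_pderiv_ne_zero_of_isUnit_jac hAB
  induction hn : w.totalDegree using Nat.strong_induction_on generalizing w with
  | _ n ih =>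
  obtain ⟨h, hwh⟩ := exists_pderiv_eq_mul_pderiv_of_jac_eq_zero hAB hAw
  have hh : h ∈ Algebra.adjoin L {A} := by
    rcases eq_or_ne h 0 with rfl | hh0
    · exact zero_mem _
    · exact ih _ (hn ▸ totalDegree_lt_of_pderiv_eq_mul hAi hh0 (hwh i)) h
        (jac_eq_zero_of_pderiv_eq_mul hwh) rfl
  rw [Algebra.adjoin_singleton_eq_range_aeval] at hh
  obtain ⟨φ, rfl⟩ := hh
  exact mem_adjoin_singleton_of_pderiv_eq_aeval_mul φ hwh

/-- **CMW's theorem over an algebraically closed field `L` of characteristic zero.**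
If `Jac(A,B)` is a unit of `L[x,y]` and `Jac(A,w) = 0`, then `w ∈ L[A]`. -/
theorem cmw_over_algClosed {L : Type*} [Field L] [IsAlgClosed L] [CharZero L]
    (A B w : MvPolynomial (Fin 2) L)
    (hAB : IsUnit (Jac A B)) (hAw : Jac A w = 0) :
    w ∈ Algebra.adjoin L {A} :=
  cmw_over_algClosed_general A B w hAB hAw
end

section
/- Let D be an integral domain of characteristic zero. Assume the two-dimensional Jacobian Conjecture holds over D: every D-algebra endomorphism f of D[x,y] whose Jacobian Jac(f(x), f(y)) is a unit of D[x,y] is an automorphism of D[x,y]. Then the two-dimensional Centralizer Conjecture holds over D: for all A, B, w ∈ D[x,y], if Jac(A,B) is a unit of D[x,y] and Jac(A,w) = 0, then w lies in D[A], the D-subalgebra of D[x,y] generated by A. -/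
open MvPolynomial

/-!
The substitution `f : x ↦ A, y ↦ B` has Jacobian `Jac(A, B)`, a unit, so by JC it is an
automorphism; write `w = f v`. By the chain rule
`Jac(A, w) = f (Jac(x, v)) * Jac(A, B) = f (∂v/∂y) * Jac(A, B)`, hence `∂v/∂y = 0`, and in
characteristic zero this puts `v` in `D[x]`. Therefore `w = f v ∈ D[f x] = D[A]`.
-/

namespace MvPolynomial

variable {R σ τ : Type*} [CommSemiring R]

theorem pderiv_aeval [Fintype σ] (g : σ → MvPolynomial τ R) (i : τ) (p : MvPolynomial σ R) :
    pderiv i (aeval g p) = ∑ j, aeval g (pderiv j p) * pderiv i (g j) := by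
  classical
  induction p using MvPolynomial.induction_on with
  | C a => simp
  | add p q hp hq => simp only [map_add, hp, hq, add_mul, Finset.sum_add_distrib]
  | mul_X p k hp =>
    simp only [map_mul, aeval_X, pderiv_mul, hp, map_add, add_mul, Finset.sum_add_distrib,
      Finset.sum_mul, pderiv_X, Pi.single_apply, mul_ite, mul_one, mul_zero, apply_ite (aeval g),
      map_zero, ite_mul, zero_mul, Finset.sum_ite_eq, Finset.mem_univ, if_true, mul_right_comm]

theorem notMem_vars_of_pderiv_eq_zero [IsAddTorsionFree R] {i : σ} {p : MvPolynomial σ R}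
    (h : pderiv i p = 0) : i ∉ p.vars := by
  intro hi
  obtain ⟨m, hm, hmi⟩ := (mem_vars_iff_mem_support i).mp hi
  have hle : Finsupp.single i 1 ≤ m :=
    Finsupp.single_le_iff.mpr (Nat.one_le_iff_ne_zero.mpr (Finsupp.mem_support_iff.mp hmi))
  have hcoeff := coeff_pderiv (i := i) p (m - Finsupp.single i 1)
  rw [h, coeff_zero, tsub_add_cancel_of_le hle, mul_comm, ← Nat.cast_add_one, ← nsmul_eq_mul,
    eq_comm, smul_eq_zero] at hcoeff
  exact hcoeff.elim (Nat.succ_ne_zero _) (mem_support_iff.mp hm)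

end MvPolynomial

theorem Jac_map {R : Type*} [CommRing R]
    (f : MvPolynomial (Fin 2) R →ₐ[R] MvPolynomial (Fin 2) R) (p q : MvPolynomial (Fin 2) R) :
    Jac (f p) (f q) = f (Jac p q) * Jac (f (X 0)) (f (X 1)) := by
  rw [aeval_unique f]
  simp only [Jac, pderiv_aeval, Fin.sum_univ_two, map_sub, map_mul, aeval_X, Function.comp_apply]
  ring

theorem Jac_X_zero {R : Type*} [CommRing R] (q : MvPolynomial (Fin 2) R) :
    Jac (X 0) q = pderiv 1 q := by
  simp [Jac]

theorem mem_adjoin_X_zero_of_pderiv_one_eq_zero {R : Type*} [CommRing R] [IsAddTorsionFree R]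
    {p : MvPolynomial (Fin 2) R} (h : pderiv 1 p = 0) :
    p ∈ Algebra.adjoin R {X 0} := by
  rw [← Set.image_singleton, ← supported_eq_adjoin_X, mem_supported]
  intro i hi
  fin_cases i
  · rfl
  · exact absurd hi (notMem_vars_of_pderiv_eq_zero h)

/-- **`JC(2,D)` implies `CC(2,D)`.** Let `D` be an integral domain of characteristic
zero. If every `D`-algebra endomorphism of `D[x,y]` with invertible Jacobian is an
automorphism, then for all `A, B, w ∈ D[x,y]` with `Jac(A,B)` a unit of `D[x,y]` and
`Jac(A,w) = 0`, we have `w ∈ D[A]`. -/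
theorem jc_implies_cc {D : Type*} [CommRing D] [IsDomain D] [CharZero D]
    (JC : ∀ f : MvPolynomial (Fin 2) D →ₐ[D] MvPolynomial (Fin 2) D,
      IsUnit (Jac (f (X 0)) (f (X 1))) → Function.Bijective f) :
    ∀ A B w : MvPolynomial (Fin 2) D,
      IsUnit (Jac A B) → Jac A w = 0 → w ∈ Algebra.adjoin D {A} := by
  intro A B w hAB hAw
  set f : MvPolynomial (Fin 2) D →ₐ[D] MvPolynomial (Fin 2) D := aeval ![A, B]
  have hfA : f (X 0) = A := aeval_X _ _
  have hfB : f (X 1) = B := aeval_X _ _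
  have hf : Function.Bijective f := JC f (by rwa [hfA, hfB])
  obtain ⟨v, rfl⟩ := hf.2 w
  have hv : pderiv 1 v = 0 := by
    have hchain := Jac_map f (X 0) v
    rw [hfA, hfB] at hchain
    refine hf.1 ?_
    rw [map_zero, ← Jac_X_zero, ← hAB.mul_left_eq_zero, ← hchain, hAw]
  rw [← hfA, ← AlgHom.map_adjoin_singleton]
  exact Subalgebra.mem_map.mpr ⟨v, mem_adjoin_X_zero_of_pderiv_one_eq_zero hv, rfl⟩
end
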